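/- If a sequence {a_n} of positive real numbers is locally Benford distributed of order k for every positive integer k, then {a_n} has Benford distributed waiting times. -/

import Mathlib

open Filter

/-- `x` has leading digit `d` in base 10: `d·10^k ≤ x < (d+1)·10^k` for some integer `k`. -/
def HasLeadingDigit (x : ℝ) (d : ℕ) : Prop :=
  ∃ k : ℤ, (d : ℝ) * 10 ^ k ≤ x ∧ x < ((d : ℝ) + 1) * 10 ^ k

/-- The Benford frequency `P(d) = log₁₀ (1 + 1/d)` of digit `d`. -/
noncomputable def benfordP (d : ℕ) : ℝ := Real.logb 10 (1 + 1 / (d : ℝ))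

/-- A sequence is Benford distributed if for each digit `d ∈ {1,…,9}` the density of
indices `n` with `D(a_n) = d` equals `P(d)`. -/
def BenfordDistributed (a : ℕ → ℝ) : Prop :=
  ∀ d : ℕ, 1 ≤ d → d ≤ 9 →
    Tendsto
      (fun N : ℕ =>
        (Nat.card {n : ℕ | 1 ≤ n ∧ n ≤ N ∧ HasLeadingDigit (a n) d} : ℝ) / N)
      atTop (nhds (benfordP d))

/-- A sequence is locally Benford distributed of order `k` if every `k`-tuple of digits
in `{1,…,9}` occurs among leading digits of `k` consecutive terms with density
`P(d₀)⋯P(d_{k-1})`. -/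
def LocallyBenfordDistributed (a : ℕ → ℝ) (k : ℕ) : Prop :=
  ∀ d : Fin k → ℕ, (∀ i, 1 ≤ d i ∧ d i ≤ 9) →
    Tendsto
      (fun N : ℕ =>
        (Nat.card {n : ℕ | 1 ≤ n ∧ n ≤ N ∧
            ∀ i : Fin k, HasLeadingDigit (a (n + (i : ℕ))) (d i)} : ℝ) / N)
      atTop (nhds (∏ i : Fin k, benfordP (d i)))

/-- `waitingTime a d i` is the waiting time `w_i(d) = n_{i+1}^{(d)} - n_i^{(d)}`, where
`n_1^{(d)} < n_2^{(d)} < ⋯` enumerates `{n ∈ ℕ, n ≥ 1 : D(a_n) = d}`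
(the `j`-th element of this set, 1-indexed, being `Nat.nth · (j-1)`). -/
noncomputable def waitingTime (a : ℕ → ℝ) (d : ℕ) (i : ℕ) : ℕ :=
  Nat.nth (fun n => 1 ≤ n ∧ HasLeadingDigit (a n) d) i -
    Nat.nth (fun n => 1 ≤ n ∧ HasLeadingDigit (a n) d) (i - 1)

/-- A sequence has Benford distributed waiting times if for each digit `d ∈ {1,…,9}`
the waiting times between occurrences of leading digit `d` take value `k` with density
`P(d)(1-P(d))^{k-1}`. -/
def BenfordWaitingTimes (a : ℕ → ℝ) : Prop :=
  ∀ d : ℕ, 1 ≤ d → d ≤ 9 → ∀ k : ℕ, 1 ≤ k →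
    Tendsto
      (fun N : ℕ =>
        (Nat.card {i : ℕ | 1 ≤ i ∧ i ≤ N ∧ waitingTime a d i = k} : ℝ) / N)
      atTop (nhds (benfordP d * (1 - benfordP d) ^ (k - 1)))

/-- A sequence `u` of real numbers is uniformly distributed modulo 1. -/
def UniformlyDistributedMod1 (u : ℕ → ℝ) : Prop :=
  ∀ t : ℝ, 0 ≤ t → t ≤ 1 →
    Tendsto
      (fun N : ℕ =>
        (Nat.card {n : ℕ | 1 ≤ n ∧ n ≤ N ∧ Int.fract (u n) ≤ t} : ℝ) / N)
      atTop (nhds t)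

/-- `nthPrime n` is the `n`-th prime (1-indexed): `nthPrime 1 = 2`, `nthPrime 2 = 3`, … -/
noncomputable def nthPrime (n : ℕ) : ℕ := Nat.nth Nat.Prime (n - 1)


/-!
Let `S` be the set of positions whose leading digit is `d`, and `n_l` its `l`-th element.
A waiting time `w = m + 1` starting at `n_l` means that the block of `m + 2` leading digits
starting at `n_l` has the shape `d, ≠d, …, ≠d, d`. Summing the local Benford law of order
`m + 2` over all such blocks, these starting points have density `P(d)² (1 - P(d))ᵐ`.
Since the first `N` waiting times start at the elements of `S` below `n_{N+1}`, and `S`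
itself has density `P(d)`, the proportion of waiting times equal to `m + 1` tends to
`P(d)² (1 - P(d))ᵐ / P(d)`.
-/

open Finset Filter Topology

noncomputable def leadingDigit (x : ℝ) : ℕ := ⌊x / 10 ^ Int.log 10 x⌋₊

lemma leadingDigit_mem_Icc {x : ℝ} (hx : 0 < x) : leadingDigit x ∈ Icc 1 9 := by
  have h10 : (0 : ℝ) < 10 ^ Int.log 10 x := by positivity
  have hlo : (10 : ℝ) ^ Int.log 10 x ≤ x := by
    exact_mod_cast Int.zpow_log_le_self (by norm_num) hx
  have hhi : x < (10 : ℝ) ^ (Int.log 10 x + 1) := by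
    exact_mod_cast Int.lt_zpow_succ_log_self (by norm_num) x
  rw [zpow_add_one₀ (by norm_num)] at hhi
  rw [mem_Icc, leadingDigit, Nat.one_le_floor_iff, one_le_div h10, ← Nat.lt_succ_iff,
    Nat.floor_lt (by positivity), div_lt_iff₀ h10]
  push_cast
  constructor <;> linarith

lemma hasLeadingDigit_iff {x : ℝ} (hx : 0 < x) {d : ℕ} (hd : d ∈ Icc 1 9) :
    HasLeadingDigit x d ↔ leadingDigit x = d := by
  have h10 : (0 : ℝ) < 10 ^ Int.log 10 x := by positivity
  rw [leadingDigit, Nat.floor_eq_iff (by positivity), le_div_iff₀ h10, div_lt_iff₀ h10]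
  refine ⟨fun ⟨k, hlo, hhi⟩ => ?_, fun h => ⟨_, h⟩⟩
  obtain ⟨hd1, hd9⟩ := mem_Icc.1 hd
  have hd1' : (1 : ℝ) ≤ d := by exact_mod_cast hd1
  have hd9' : (d : ℝ) + 1 ≤ 10 := by exact_mod_cast Nat.succ_le_succ hd9
  have h10k : (0 : ℝ) < 10 ^ k := by positivity
  -- `1 ≤ d ≤ 9` pins `x` between `10 ^ k` and `10 ^ (k + 1)`
  have hk : Int.log 10 x = k := by
    refine le_antisymm (Int.lt_add_one_iff.1 ((Int.lt_zpow_iff_log_lt (by norm_num) hx).1 ?_))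
      ((Int.zpow_le_iff_le_log (by norm_num) hx).1 ?_)
    · push_cast
      rw [zpow_add_one₀ (by norm_num)]
      nlinarith
    · push_cast
      nlinarith
  rw [hk]
  exact ⟨hlo, hhi⟩

lemma benfordP_pos {d : ℕ} (hd : 1 ≤ d) : 0 < benfordP d :=
  Real.logb_pos (by norm_num) (by simp; positivity)

lemma sum_benfordP : ∑ d ∈ Icc 1 9, benfordP d = 1 := by
  have hprod : ∏ d ∈ (Icc 1 9 : Finset ℕ), (1 + 1 / (d : ℝ)) = 10 := by
    rw [show (Icc 1 9 : Finset ℕ) = {1, 2, 3, 4, 5, 6, 7, 8, 9} by rfl]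
    norm_num
  unfold benfordP
  rw [← Real.logb_prod _ _ fun d _ => by positivity, hprod, Real.logb_self_eq_one (by norm_num)]

def HasDensity (S : ℕ → Prop) [DecidablePred S] (p : ℝ) : Prop :=
  Tendsto (fun N : ℕ => (Nat.count S N : ℝ) / N) atTop (𝓝 p)

namespace HasDensity

variable {S T : ℕ → Prop} [DecidablePred S] [DecidablePred T] {p : ℝ}

lemma congr (h : HasDensity S p) (hST : ∀ n, S n ↔ T n) : HasDensity T p := by
  obtain rfl : S = T := funext fun n => propext (hST n)
  convert h

lemma infinite (h : HasDensity S p) (hp : 0 < p) : (Set.ofPred S).Infinite := by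
  intro hfin
  have h0 : HasDensity S 0 :=
    squeeze_zero (fun _ => by positivity)
      (fun N => div_le_div_of_nonneg_right (Nat.cast_le.2 (Nat.count_le_card hfin N))
        N.cast_nonneg)
      (tendsto_const_div_atTop_nhds_zero_nat _)
  exact hp.ne' (tendsto_nhds_unique h h0)

end HasDensity

lemma hasDensity_mem_finset {β : Type*} [DecidableEq β] (f : ℕ → β) (F : Finset β) (ρ : β → ℝ)
    (h : ∀ e ∈ F, HasDensity (f · = e) (ρ e)) : HasDensity (f · ∈ F) (∑ e ∈ F, ρ e) := by
  have hcount (N : ℕ) : Nat.count (f · ∈ F) N = ∑ e ∈ F, Nat.count (f · = e) N := by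
    simp only [Nat.count_eq_card_filter_range, sum_card_fiberwise_eq_card_filter]
  unfold HasDensity
  simp_rw [hcount, Nat.cast_sum, sum_div]
  exact tendsto_finsetSum F h

lemma natCard_setOf_eq_count (Q : ℕ → Prop) [DecidablePred Q] (N : ℕ) :
    Nat.card {n : ℕ | 1 ≤ n ∧ n ≤ N ∧ Q n} = Nat.count (fun j => Q (j + 1)) N := by
  have : {n : ℕ | 1 ≤ n ∧ n ≤ N ∧ Q n} = (· + 1) '' ↑{j ∈ range N | Q (j + 1)} := by
    ext n
    simp only [Set.mem_ofPred_eq, Set.mem_image, coe_filter, mem_range]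
    constructor
    · rintro ⟨hn1, hnN, hQ⟩
      exact ⟨n - 1, by rw [Nat.sub_add_cancel hn1]; exact ⟨by omega, hQ⟩, by omega⟩
    · rintro ⟨j, ⟨hj, hQ⟩, rfl⟩
      exact ⟨by omega, by omega, hQ⟩
  rw [this, Nat.card_image_of_injective (add_left_injective 1), Nat.card_coe_set_eq,
    Set.ncard_coe_finset, Nat.count_eq_card_filter_range]

lemma tendsto_natCard_div_iff_hasDensity (Q : ℕ → Prop) [DecidablePred Q] (p : ℝ) :
    Tendsto (fun N : ℕ => (Nat.card {n : ℕ | 1 ≤ n ∧ n ≤ N ∧ Q n} : ℝ) / N) atTop (𝓝 p) ↔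
      HasDensity (fun j => Q (j + 1)) p := by
  simp only [natCard_setOf_eq_count, HasDensity]

def IsGapStart (S : ℕ → Prop) (k n : ℕ) : Prop :=
  S n ∧ (∀ i < k, 0 < i → ¬ S (n + i)) ∧ S (n + k)

instance {S : ℕ → Prop} [DecidablePred S] {k : ℕ} : DecidablePred (IsGapStart S k) :=
  fun _ => inferInstanceAs (Decidable (_ ∧ _ ∧ _))

namespace Nat

variable {S : ℕ → Prop} {k : ℕ}

lemma nth_succ_sub_eq_iff_isGapStart (hS : (Set.ofPred S).Infinite) (hk : 0 < k) (j : ℕ) :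
    nth S (j + 1) - nth S j = k ↔ IsGapStart S k (nth S j) := by
  have hlt : nth S j < nth S (j + 1) := nth_strictMono hS j.lt_succ_self
  constructor
  · intro h
    refine ⟨nth_mem_of_infinite hS j, fun i hik hi hSi => ?_, ?_⟩
    · have := le_nth_of_lt_nth_succ (k := j) (by omega) hSi
      omega
    · rw [show nth S j + k = nth S (j + 1) by omega]
      exact nth_mem_of_infinite hS _
  · classical
    rintro ⟨-, hgap, hSk⟩
    have hle : nth S (j + 1) ≤ nth S j + k := by
      have hj : j < count S (nth S j + k) := (lt_nth_iff_count_lt hS).2 (by omega)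
      rw [← nth_count hSk]
      exact (nth_le_nth hS).2 hj
    have hge : nth S j + k ≤ nth S (j + 1) := by
      by_contra! hlt'
      exact hgap (nth S (j + 1) - nth S j) (by omega) (by omega)
        (by rw [Nat.add_sub_cancel' hlt.le]; exact nth_mem_of_infinite hS _)
    omega

lemma count_nth_succ_sub_eq [DecidablePred S] (hS : (Set.ofPred S).Infinite) (hk : 0 < k)
    (N : ℕ) :
    count (fun j => nth S (j + 1) - nth S j = k) N = count (IsGapStart S k) (nth S N) := by
  simp only [count_eq_card_filter_range]
  rw [← Finset.card_image_of_injective _ (nth_injective hS)]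
  congr 1
  ext n
  simp only [mem_image, mem_filter, mem_range, nth_succ_sub_eq_iff_isGapStart hS hk]
  constructor
  · rintro ⟨j, ⟨hj, hgap⟩, rfl⟩
    exact ⟨(nth_lt_nth hS).2 hj, hgap⟩
  · rintro ⟨hn, hgap⟩
    have hcount : nth S (count S n) = n := nth_count hgap.1
    refine ⟨count S n, ⟨?_, by rwa [hcount]⟩, hcount⟩
    rwa [← nth_lt_nth hS, hcount]

end Nat

lemma HasDensity.nth_succ_sub_eq {S : ℕ → Prop} [DecidablePred S] {p q : ℝ} {k : ℕ}
    (hS : HasDensity S p) (hp : 0 < p) (hk : 0 < k) (hgap : HasDensity (IsGapStart S k) q) :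
    HasDensity (fun j => Nat.nth S (j + 1) - Nat.nth S j = k) (q / p) := by
  have hinf := hS.infinite hp
  have hnth : Tendsto (Nat.nth S) atTop atTop := (Nat.nth_strictMono hinf).tendsto_atTop
  refine ((hgap.comp hnth).div (hS.comp hnth) hp.ne').congr' ?_
  filter_upwards [eventually_gt_atTop 0] with N hN
  have hpos : (0 : ℝ) < Nat.nth S N := by
    exact_mod_cast (Nat.zero_le _).trans_lt (Nat.nth_strictMono hinf hN)
  simp only [Pi.div_apply, Function.comp_apply, Nat.count_nth_succ_sub_eq hinf hk,
    Nat.count_nth_of_infinite hinf]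
  field_simp

section GapPattern

variable {α : Type*} [DecidableEq α] {A : Finset α} {d : α} {m : ℕ}

/-- The admissible letters `d, ≠d, …, ≠d, d` of a block of length `m + 2`. -/
def gapPattern (A : Finset α) (d : α) (m : ℕ) : Fin (m + 2) → Finset α :=
  Fin.cons {d} (Fin.snoc (fun _ : Fin m => A.erase d) {d})

lemma gapPattern_subset (hd : d ∈ A) (i : Fin (m + 2)) : gapPattern A d m i ⊆ A := by
  refine Fin.cases ?_ (fun i => Fin.lastCases ?_ (fun i => ?_) i) i <;>
    simp [gapPattern, hd, erase_subset]

lemma isGapStart_iff_mem_piFinset {δ : ℕ → α} (hδ : ∀ j, δ j ∈ A) (j : ℕ) :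
    IsGapStart (δ · = d) (m + 1) j ↔
      (fun i : Fin (m + 2) => δ (j + i)) ∈ Fintype.piFinset (gapPattern A d m) := by
  rw [Fintype.mem_piFinset, Fin.forall_fin_succ, Fin.forall_fin_succ']
  simp only [gapPattern, Fin.cons_zero, Fin.cons_succ, Fin.snoc_castSucc, Fin.snoc_last,
    mem_singleton, mem_erase, hδ, and_true, IsGapStart, Fin.val_zero, add_zero, Fin.val_succ,
    Fin.val_castSucc, Fin.val_last]
  refine and_congr_right' (and_congr_left' ⟨fun h i => h (i + 1) (by omega) (by omega), ?_⟩)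
  intro h i hi hi0
  simpa [Nat.sub_add_cancel hi0] using h ⟨i - 1, by omega⟩

lemma sum_prod_gapPattern {ρ : α → ℝ} (hd : d ∈ A) (hA : ∑ x ∈ A, ρ x = 1) :
    ∑ e ∈ Fintype.piFinset (gapPattern A d m), ∏ i, ρ (e i) = ρ d ^ 2 * (1 - ρ d) ^ m := by
  rw [← prod_univ_sum, Fin.prod_univ_succ, Fin.prod_univ_castSucc]
  simp only [gapPattern, Fin.cons_zero, sum_singleton, Fin.cons_succ, Fin.snoc_castSucc,
    sum_erase_eq_sub hd, hA, prod_const, card_univ, Fintype.card_fin, Fin.succ_last,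
    Nat.succ_eq_add_one, Fin.cons_last, Fin.snoc_last]
  ring

lemma hasDensity_isGapStart {ρ : α → ℝ} {δ : ℕ → α} (hδ : ∀ j, δ j ∈ A)
    (hA : ∑ x ∈ A, ρ x = 1) (hd : d ∈ A)
    (hblock : ∀ e : Fin (m + 2) → α, (∀ i, e i ∈ A) →
      HasDensity (fun j => ∀ i : Fin (m + 2), δ (j + i) = e i) (∏ i, ρ (e i))) :
    HasDensity (IsGapStart (δ · = d) (m + 1)) (ρ d ^ 2 * (1 - ρ d) ^ m) := by
  rw [← sum_prod_gapPattern hd hA]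
  refine (hasDensity_mem_finset (fun j (i : Fin (m + 2)) => δ (j + i)) _ _ fun e he => ?_).congr
    fun j => (isGapStart_iff_mem_piFinset hδ j).symm
  exact (hblock e fun i => gapPattern_subset hd i (Fintype.mem_piFinset.1 he i)).congr
    fun j => funext_iff.symm

end GapPattern

lemma LocallyBenfordDistributed.hasDensity {a : ℕ → ℝ} {k : ℕ} (hpos : ∀ n, 1 ≤ n → 0 < a n)
    (h : LocallyBenfordDistributed a k) {e : Fin k → ℕ} (he : ∀ i, e i ∈ Icc 1 9) :
    HasDensity (fun j => ∀ i : Fin k, leadingDigit (a (j + i + 1)) = e i)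
      (∏ i, benfordP (e i)) := by
  classical
  refine ((tendsto_natCard_div_iff_hasDensity _ _).1 (h e fun i => mem_Icc.1 (he i))).congr
    fun j => forall_congr' fun i => ?_
  rw [add_right_comm]
  exact hasLeadingDigit_iff (hpos _ (by omega)) (he i)

lemma waitingTime_succ {a : ℕ → ℝ} (hpos : ∀ n, 1 ≤ n → 0 < a n) {d : ℕ} (hd : d ∈ Icc 1 9)
    (hinf : (Set.ofPred fun j => leadingDigit (a (j + 1)) = d).Infinite) (j : ℕ) :
    waitingTime a d (j + 1) = Nat.nth (fun j => leadingDigit (a (j + 1)) = d) (j + 1) -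
      Nat.nth (fun j => leadingDigit (a (j + 1)) = d) j := by
  set P : ℕ → Prop := fun n => 1 ≤ n ∧ HasLeadingDigit (a n) d
  have hshift : (fun j => P (j + 1)) = fun j => leadingDigit (a (j + 1)) = d := by
    ext j
    simp only [P, le_add_iff_nonneg_left, zero_le, true_and]
    exact hasLeadingDigit_iff (hpos _ (by omega)) hd
  have hPinf : (Set.ofPred P).Infinite := by
    rw [← hshift] at hinf
    exact (hinf.image (add_left_injective 1).injOn).mono (by rintro _ ⟨j, hj, rfl⟩; exact hj)
  have hnth (i : ℕ) : Nat.nth (fun j => leadingDigit (a (j + 1)) = d) i + 1 = Nat.nth P i := by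
    rw [← hshift]
    exact Nat.nth_add (by simp [P]) (Nat.one_le_iff_ne_zero.1 (Nat.nth_mem_of_infinite hPinf i).1)
  rw [waitingTime, Nat.add_sub_cancel, ← hnth, ← hnth]
  omega

/-- A sequence that is locally Benford distributed of every order has Benford
distributed waiting times. -/
theorem benfordWaitingTimes_of_locallyBenford (a : ℕ → ℝ)
    (hpos : ∀ n : ℕ, 1 ≤ n → 0 < a n)
    (h : ∀ k : ℕ, 1 ≤ k → LocallyBenfordDistributed a k) :
    BenfordWaitingTimes a := by
  intro d hd1 hd9 k hk
  obtain ⟨m, rfl⟩ : ∃ m, k = m + 1 := ⟨k - 1, by omega⟩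
  have hd : d ∈ Icc 1 9 := mem_Icc.2 ⟨hd1, hd9⟩
  set δ : ℕ → ℕ := fun j => leadingDigit (a (j + 1))
  have hδ (j : ℕ) : δ j ∈ Icc 1 9 := leadingDigit_mem_Icc (hpos _ j.succ_pos)
  have hS : HasDensity (δ · = d) (benfordP d) := by
    simpa using (h 1 le_rfl).hasDensity hpos (e := fun _ => d) fun _ => hd
  have hgap := hasDensity_isGapStart hδ sum_benfordP hd fun e he =>
    (h (m + 2) (by omega)).hasDensity hpos he
  have hinf := hS.infinite (benfordP_pos hd1)
  have hwait := hS.nth_succ_sub_eq (benfordP_pos hd1) m.succ_pos hgap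
  have hlimit : benfordP d ^ 2 * (1 - benfordP d) ^ m / benfordP d =
      benfordP d * (1 - benfordP d) ^ m := by
    field_simp [(benfordP_pos hd1).ne']
  rw [tendsto_natCard_div_iff_hasDensity, Nat.add_sub_cancel, ← hlimit]
  exact hwait.congr fun j => by rw [waitingTime_succ hpos hd hinf]
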